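/- Let G_n be obtained from a d-regular weighted multigraph G on n−1 vertices (all edge weights 2, underlying graph d/2-regular) by splitting one vertex v into v_0, v_1 joined by an edge of weight d/2, with each former weight-2 edge {v,w} replaced by weight-1 edges {v_0,w} and {v_1,w}. Then for every ε > 0 there exists N such that for all n ≥ N, λ_2(G_n) ≥ d/2 − ε. -/

import Mathlib

/-!
The vector `x` equal to `1 - 2/n` on the two split vertices and `-2/n` elsewhere is orthogonal to
the all-ones eigenvector (eigenvalue `d`), and its Rayleigh quotient is
`(d - 4d/n) / (2 - 4/n) = d/2 - d/(n - 2)`. On the plane spanned by `1` and `x` the Rayleigh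
quotient is at least `min d (d/2 - d/(n-2))`, and that plane meets the span of all eigenvectors
but the top one, so `λ₂ ≥ d/2 - d/(n - 2)`.
-/

open Matrix

namespace Matrix.IsHermitian

variable {ι : Type*} [Fintype ι] [DecidableEq ι] {A : Matrix ι ι ℝ} (hA : A.IsHermitian)

theorem sum_eigenvectorBasis_dotProduct_mul (x y : ι → ℝ) :
    ∑ k, (⇑(hA.eigenvectorBasis k) ⬝ᵥ x) * (⇑(hA.eigenvectorBasis k) ⬝ᵥ y) = x ⬝ᵥ y := by
  simpa [EuclideanSpace.inner_eq_star_dotProduct, dotProduct_comm] using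
    hA.eigenvectorBasis.sum_inner_mul_inner (WithLp.toLp 2 x) (WithLp.toLp 2 y)

theorem eigenvectorBasis_dotProduct_mulVec (k : ι) (x : ι → ℝ) :
    ⇑(hA.eigenvectorBasis k) ⬝ᵥ (A *ᵥ x) =
      hA.eigenvalues k * (⇑(hA.eigenvectorBasis k) ⬝ᵥ x) := by
  rw [dotProduct_mulVec, ← mulVec_transpose, ← conjTranspose_eq_transpose_of_trivial, hA.eq,
    hA.mulVec_eigenvectorBasis, smul_dotProduct, smul_eq_mul]

theorem dotProduct_mulVec_eq_sum (x : ι → ℝ) :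
    x ⬝ᵥ (A *ᵥ x) = ∑ k, hA.eigenvalues k * (⇑(hA.eigenvectorBasis k) ⬝ᵥ x) ^ 2 := by
  rw [← hA.sum_eigenvectorBasis_dotProduct_mul]
  simp only [eigenvectorBasis_dotProduct_mulVec]
  exact Finset.sum_congr rfl fun k _ => by ring

theorem dotProduct_mulVec_le_of_eigenvectorBasis_dotProduct_eq_zero {k₀ : ι} {c : ℝ}
    (hc : ∀ k, k ≠ k₀ → hA.eigenvalues k ≤ c) {x : ι → ℝ}
    (hx : ⇑(hA.eigenvectorBasis k₀) ⬝ᵥ x = 0) :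
    x ⬝ᵥ (A *ᵥ x) ≤ c * (x ⬝ᵥ x) := by
  rw [hA.dotProduct_mulVec_eq_sum, ← hA.sum_eigenvectorBasis_dotProduct_mul, Finset.mul_sum]
  refine Finset.sum_le_sum fun k _ => ?_
  rcases eq_or_ne k k₀ with rfl | hk
  · simp [hx]
  · rw [← sq]
    exact mul_le_mul_of_nonneg_right (hc k hk) (sq_nonneg _)

/-- The combination `w = p x • v - p v • x`, with `p` the coordinate along the eigenvector `k₀`,
satisfies `p w = 0`; as `v ⟂ x` and `v ⟂ A x`, the bound for `w` splits into one for `v` and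
one for `x`. -/
theorem dotProduct_mulVec_le_of_orthogonal_eigenvector {k₀ : ι} {c t : ℝ}
    (hc : ∀ k, k ≠ k₀ → hA.eigenvalues k ≤ c) {v x : ι → ℝ} (hv : v ≠ 0)
    (hAv : A *ᵥ v = t • v) (hvx : v ⬝ᵥ x = 0) (hxt : x ⬝ᵥ (A *ᵥ x) ≤ t * (x ⬝ᵥ x)) :
    x ⬝ᵥ (A *ᵥ x) ≤ c * (x ⬝ᵥ x) := by
  set p : (ι → ℝ) → ℝ := fun y => ⇑(hA.eigenvectorBasis k₀) ⬝ᵥ y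
  have hvv : 0 < v ⬝ᵥ v := by simpa using dotProduct_self_star_pos_iff.mpr hv
  have hxx : 0 ≤ x ⬝ᵥ x := by simpa using dotProduct_star_self_nonneg x
  rcases le_or_gt t c with htc | hct
  · exact hxt.trans (mul_le_mul_of_nonneg_right htc hxx)
  have hvAx : v ⬝ᵥ (A *ᵥ x) = 0 := by
    rw [dotProduct_mulVec, ← mulVec_transpose, ← conjTranspose_eq_transpose_of_trivial, hA.eq,
      hAv, smul_dotProduct, hvx, smul_zero]
  have hxAv : x ⬝ᵥ (A *ᵥ v) = 0 := by
    rw [hAv, dotProduct_smul, dotProduct_comm, hvx, smul_zero]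
  have hpv : p v ≠ 0 := by
    intro h
    have := hA.dotProduct_mulVec_le_of_eigenvectorBasis_dotProduct_eq_zero hc h
    rw [hAv, dotProduct_smul, smul_eq_mul] at this
    nlinarith
  have hw := hA.dotProduct_mulVec_le_of_eigenvectorBasis_dotProduct_eq_zero hc
    (x := p x • v - p v • x) (by simp only [p, dotProduct_sub, dotProduct_smul, smul_eq_mul]; ring)
  simp only [mulVec_sub, mulVec_smul, dotProduct_sub, sub_dotProduct, dotProduct_smul,
    smul_dotProduct, smul_eq_mul, hvAx, hxAv, hvx, dotProduct_comm x v] at hw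
  rw [hAv, dotProduct_smul, smul_eq_mul] at hw
  have hpv2 : 0 < p v ^ 2 := by positivity
  nlinarith [mul_nonneg (sq_nonneg (p x)) hvv.le]

end Matrix.IsHermitian

theorem apply_le_of_antitone_comp_perm {n : ℕ} {μ : Fin n → ℝ} {σ : Equiv.Perm (Fin n)}
    (h : Antitone (μ ∘ σ)) (h1 : 1 < n) {k : Fin n} (hk : k ≠ σ ⟨0, by omega⟩) :
    μ k ≤ μ (σ ⟨1, h1⟩) := by
  have : (⟨1, h1⟩ : Fin n) ≤ σ.symm k := by
    show 1 ≤ (σ.symm k).val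
    by_contra! h0
    exact hk (σ.symm_apply_eq.mp (Fin.ext (show (σ.symm k).val = 0 by omega)))
  simpa using h this

theorem dotProduct_mulVec_sub_smul_one {ι : Type*} [Fintype ι] {A : Matrix ι ι ℝ}
    (hA : A.IsSymm) {t : ℝ} (hA1 : A *ᵥ 1 = t • 1) (u : ι → ℝ) (s : ℝ)
    (h : 1 ⬝ᵥ (u - s • 1) = 0) :
    (u - s • 1) ⬝ᵥ (A *ᵥ (u - s • 1)) = u ⬝ᵥ (A *ᵥ u) - s * t * (1 ⬝ᵥ u) := by
  have h1A : ∀ y, 1 ⬝ᵥ (A *ᵥ y) = t * (1 ⬝ᵥ y) := fun y => by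
    rw [dotProduct_mulVec, ← mulVec_transpose, hA.eq, hA1, smul_dotProduct, smul_eq_mul]
  rw [mulVec_sub, mulVec_smul, hA1, dotProduct_sub, dotProduct_smul, dotProduct_smul,
    dotProduct_comm _ 1, h, sub_dotProduct, smul_dotProduct, h1A]
  simp [mul_assoc]

section SplitVector

variable {ι : Type*} [Fintype ι] [DecidableEq ι]

noncomputable def splitVector (i j : ι) : ι → ℝ :=
  Pi.single i 1 + Pi.single j 1 - (2 / Fintype.card ι : ℝ) • 1

theorem one_dotProduct_splitVector (i j : ι) : 1 ⬝ᵥ splitVector i j = 0 := by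
  have : Nonempty ι := ⟨i⟩
  have : (Fintype.card ι : ℝ) ≠ 0 := by exact_mod_cast Fintype.card_ne_zero
  simp only [splitVector, dotProduct_sub, dotProduct_add, dotProduct_single, Pi.one_apply,
    mul_one, dotProduct_smul, one_dotProduct_one, smul_eq_mul, div_mul_cancel₀ _ this]
  norm_num

theorem splitVector_dotProduct_mulVec {A : Matrix ι ι ℝ} (hA : A.IsSymm) {t : ℝ}
    (hA1 : A *ᵥ 1 = t • 1) (i j : ι) :
    splitVector i j ⬝ᵥ (A *ᵥ splitVector i j) =
      A i i + 2 * A i j + A j j - 4 * t / Fintype.card ι := by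
  rw [splitVector, dotProduct_mulVec_sub_smul_one hA hA1 _ _ (one_dotProduct_splitVector i j)]
  simp only [mulVec_add, mulVec_single, MulOpposite.op_one, one_smul, dotProduct_add,
    add_dotProduct, single_dotProduct, col_apply, one_mul, hA.apply i j, dotProduct_single,
    Pi.one_apply, mul_one]
  ring

theorem splitVector_dotProduct_self {i j : ι} (hij : i ≠ j) :
    splitVector i j ⬝ᵥ splitVector i j = 2 - 4 / Fintype.card ι := by
  have := splitVector_dotProduct_mulVec (A := 1) (t := 1) (by simp) (by simp) i j
  simp only [one_mulVec, one_apply_eq, one_apply_ne hij] at this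
  linarith

end SplitVector

theorem half_sub_le_of_le_mul {d ε c n : ℝ} (hn : 2 < n) (hd : d ≤ ε * (n - 2))
    (h : d - 4 * d / n ≤ c * (2 - 4 / n)) : d / 2 - ε ≤ c := by
  have hpos : 0 < 2 - 4 / n := by
    rw [sub_pos, div_lt_iff₀ (by positivity)]; linarith
  have hsplit : (d / 2 - ε) * (2 - 4 / n) = d - 4 * d / n + 2 / n * (d - ε * (n - 2)) := by
    field_simp; ring
  refine le_of_mul_le_mul_right (hsplit ▸ h.trans' ?_) hpos
  have : 0 ≤ 2 / n := by positivity
  nlinarith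

/-- Splitting one vertex of a `d`-regular weighted multigraph (underlying graph
`d/2`-regular, all weights 2) into two vertices `i, j` joined by a weight-`d/2` edge,
with each former weight-2 edge replaced by two weight-1 edges, yields a graph whose
second adjacency eigenvalue is at least `d/2 − ε` for all sufficiently large `n`. -/
theorem stmt14 (d : ℕ) (ε : ℝ) (hε : 0 < ε) :
    ∃ N : ℕ, 2 ≤ N ∧ ∀ n, N ≤ n → ∀ (hn : 2 ≤ n)
      (A : Matrix (Fin n) (Fin n) ℝ) (i j : Fin n),
      i ≠ j →
      A.IsSymm →
      (∀ k, A k k = 0) →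
      A i j = (d : ℝ) / 2 →
      (∀ k, k ≠ i → k ≠ j → A i k = A j k ∧ (A i k = 0 ∨ A i k = 1)) →
      (∀ k l, k ≠ i → k ≠ j → l ≠ i → l ≠ j → A k l = 0 ∨ A k l = 2) →
      (∀ k, ∑ l, A k l = d) →
      ∀ (hA : A.IsHermitian) (ev : Fin n → ℝ) (σ : Equiv.Perm (Fin n)),
        ev = hA.eigenvalues ∘ σ → Antitone ev →
        (d : ℝ) / 2 - ε ≤ ev ⟨1, by omega⟩ := by
  refine ⟨⌈(d : ℝ) / ε⌉₊ + 3, by omega, ?_⟩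
  intro n hN _ A i j hij hsymm hdiag hAij _ _ hrow hA ev σ rfl hanti
  have hA1 : A *ᵥ 1 = (d : ℝ) • 1 := by ext k; simp [mulVec, dotProduct, hrow]
  have hxAx : splitVector i j ⬝ᵥ (A *ᵥ splitVector i j) = d - 4 * d / n := by
    rw [splitVector_dotProduct_mulVec hsymm hA1, hdiag, hdiag, hAij, Fintype.card_fin]
    ring
  have hxx : splitVector i j ⬝ᵥ splitVector i j = 2 - 4 / n := by
    rw [splitVector_dotProduct_self hij, Fintype.card_fin]
  have hbound := hA.dotProduct_mulVec_le_of_orthogonal_eigenvector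
    (fun k hk => apply_le_of_antitone_comp_perm hanti (by omega) hk)
    (Function.ne_iff.mpr ⟨i, one_ne_zero⟩) hA1 (one_dotProduct_splitVector i j)
    (by rw [hxAx, hxx]; ring_nf; linarith [Nat.cast_nonneg (α := ℝ) d])
  rw [hxAx, hxx] at hbound
  have hd : (d : ℝ) ≤ ε * (n - 2) := by
    have : (d : ℝ) / ε ≤ n - 3 := (Nat.le_ceil _).trans (by
      rw [le_sub_iff_add_le]; exact_mod_cast hN)
    rw [div_le_iff₀ hε] at this
    nlinarith
  exact half_sub_le_of_le_mul (by exact_mod_cast (by omega : 2 < n)) hd hbound
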